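/- There exists a constant C > 0 such that for every t ∈ ℝ and every j ∈ ℤ, the discrete Schrödinger kernel satisfies |K_t(j)| ≤ C (1+|t|)^{-1/3}. -/

import Mathlib

open Real MeasureTheory

/-- The discrete Schrödinger kernel
`K t j = (1/(2π)) ∫_{-π}^{π} e^{-4 i t sin²(ξ/2)} e^{i j ξ} dξ`. -/
noncomputable def schrodingerKernel (t : ℝ) (j : ℤ) : ℂ :=
  (1 / (2 * Real.pi)) * ∫ ξ in (-Real.pi)..Real.pi,
    Complex.exp (-4 * Complex.I * (t : ℂ) * ((Real.sin (ξ / 2) : ℂ)) ^ 2) *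
      Complex.exp (Complex.I * (j : ℂ) * (ξ : ℂ))

/-!
Van der Corput: if `ν ^ k ≤ |φ⁽ᵏ⁾|` on an interval (and `φ'` is monotone when `k = 1`), then
`‖∫ exp (i φ)‖ ≤ C_k / ν`. For `k = 1` this is integration by parts. For the step from `k` to
`k + 1`, the derivative `φ⁽ᵏ⁾` grows at rate `ν ^ (k + 1)` away from a single point `c`, so it
exceeds `ν ^ k` outside the window `[c - 1/ν, c + 1/ν]`; the window itself contributes at most
`2/ν`.

The kernel is `(2π)⁻¹ ∫ exp (i (j ξ - 2 t (1 - cos ξ)))`, a phase with second and third derivatives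
`-2 t cos ξ` and `2 t sin ξ`. Cutting `[-π, π]` into pieces on which `|cos| ≥ 1/2` or `|sin| ≥ 1/2`
gives the bound `O(|t| ^ (-1/3))` for `|t| ≥ 1`; for `|t| ≤ 1` the kernel is trivially at most `1`.
-/

open Set intervalIntegral
open scoped Complex

section VanDerCorput

variable {φ φ' φ'' φ''' : ℝ → ℝ} {a b : ℝ}

lemma norm_integral_cexp_neg :
    ‖∫ x in a..b, cexp (Complex.I * ↑(-φ x))‖ = ‖∫ x in a..b, cexp (Complex.I * φ x)‖ := by
  have hconj (x : ℝ) : cexp (Complex.I * ↑(-φ x)) = (starRingEnd ℂ) (cexp (Complex.I * φ x)) := by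
    rw [← Complex.exp_conj]; simp
  simp_rw [hconj, intervalIntegral_conj, RCLike.norm_conj]

lemma intervalIntegrable_cexp_I_mul (hab : a ≤ b) (hφ : ContinuousOn φ (Icc a b)) :
    IntervalIntegrable (fun x => cexp (Complex.I * φ x)) volume a b :=
  ContinuousOn.intervalIntegrable_of_Icc hab (by fun_prop)

lemma ContinuousOn.forall_le_or_forall_le_neg {f : ℝ → ℝ} {μ : ℝ} (hμ : 0 < μ)
    (hf : ContinuousOn f (Icc a b)) (hlow : ∀ x ∈ Icc a b, μ ≤ |f x|) :
    (∀ x ∈ Icc a b, μ ≤ f x) ∨ (∀ x ∈ Icc a b, μ ≤ -f x) := by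
  by_contra! ⟨⟨x, hx, hfx⟩, ⟨y, hy, hfy⟩⟩
  have hneg : f x < 0 := by cases abs_cases (f x) <;> linarith [hlow x hx]
  have hpos : 0 < f y := by cases abs_cases (f y) <;> linarith [hlow y hy]
  obtain ⟨z, hz, hfz⟩ := intermediate_value_uIcc (hf.mono (uIcc_subset_Icc hx hy))
    (mem_uIcc.2 (Or.inl ⟨hneg.le, hpos.le⟩))
  have := hlow z (uIcc_subset_Icc hx hy hz)
  rw [hfz, abs_zero] at this
  linarith

lemma exists_mul_abs_sub_le_abs_of_le_deriv {g g' : ℝ → ℝ} {μ : ℝ} (hab : a ≤ b)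
    (hg : ∀ x ∈ Icc a b, HasDerivAt g (g' x) x) (hlow : ∀ x ∈ Icc a b, μ ≤ g' x) :
    ∃ c ∈ Icc a b, ∀ x ∈ Icc a b, μ * |x - c| ≤ |g x| := by
  have hcont : ContinuousOn g (Icc a b) := HasDerivAt.continuousOn hg
  have hgrowth : ∀ x ∈ Icc a b, ∀ y ∈ Icc a b, x ≤ y → μ * (y - x) ≤ g y - g x :=
    (convex_Icc a b).mul_sub_le_image_sub_of_le_deriv hcont
      (fun x hx => (hg x (interior_subset hx)).differentiableAt.differentiableWithinAt)
      (fun x hx => (hg x (interior_subset hx)).deriv ▸ hlow x (interior_subset hx))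
  have ha : a ∈ Icc a b := left_mem_Icc.2 hab
  have hb : b ∈ Icc a b := right_mem_Icc.2 hab
  rcases le_or_gt 0 (g a) with hga | hga
  · refine ⟨a, ha, fun x hx => ?_⟩
    rw [abs_of_nonneg (sub_nonneg.2 hx.1)]
    linarith [hgrowth a ha x hx hx.1, le_abs_self (g x)]
  rcases le_or_gt (g b) 0 with hgb | hgb
  · refine ⟨b, hb, fun x hx => ?_⟩
    rw [abs_of_nonpos (sub_nonpos.2 hx.2)]
    linarith [hgrowth x hx b hb hx.2, neg_abs_le (g x)]
  obtain ⟨c, hc, hgc⟩ := intermediate_value_Icc hab hcont ⟨hga.le, hgb.le⟩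
  refine ⟨c, hc, fun x hx => ?_⟩
  rcases le_total c x with hcx | hxc
  · rw [abs_of_nonneg (sub_nonneg.2 hcx)]
    linarith [hgrowth c hc x hx hcx, le_abs_self (g x)]
  · rw [abs_of_nonpos (sub_nonpos.2 hxc)]
    linarith [hgrowth x hx c hc hxc, neg_abs_le (g x)]

lemma norm_integral_le_of_le_off_window {f : ℝ → ℂ} {c δ B : ℝ} (hc : c ∈ Icc a b)
    (hδ : 0 ≤ δ) (hB : 0 ≤ B) (hf : ∀ x, ‖f x‖ ≤ 1) (hfi : IntervalIntegrable f volume a b)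
    (hfar : ∀ u v, a ≤ u → u ≤ v → v ≤ b → (∀ x ∈ Icc u v, δ ≤ |x - c|) →
      ‖∫ x in u..v, f x‖ ≤ B) :
    ‖∫ x in a..b, f x‖ ≤ 2 * B + 2 * δ := by
  set p := max a (c - δ)
  set q := min b (c + δ)
  have hap : a ≤ p := le_max_left _ _
  have hpq : p ≤ q := max_le (le_min (hc.1.trans hc.2) (by linarith [hc.1]))
    (le_min (by linarith [hc.2]) (by linarith))
  have hqb : q ≤ b := min_le_left _ _
  have hfi' : ∀ u v, a ≤ u → u ≤ v → v ≤ b → IntervalIntegrable f volume u v :=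
    fun u v hu huv hv => hfi.mono_set <| by
      rw [uIcc_of_le huv, uIcc_of_le (hu.trans (huv.trans hv))]; exact Icc_subset_Icc hu hv
  have hleft : ‖∫ x in a..p, f x‖ ≤ B := by
    rcases max_cases a (c - δ) with ⟨hp, -⟩ | ⟨hp, -⟩
    · simp [p, hp, hB]
    · refine hfar a p le_rfl hap (hpq.trans hqb) fun x hx => ?_
      rw [abs_sub_comm, abs_of_nonneg] <;> linarith [hx.2]
  have hmid : ‖∫ x in p..q, f x‖ ≤ 2 * δ := by
    have := norm_integral_le_of_norm_le_const (a := p) (b := q) fun x _ => hf x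
    rw [one_mul, abs_of_nonneg (sub_nonneg.2 hpq)] at this
    linarith [le_max_right a (c - δ), min_le_right b (c + δ)]
  have hright : ‖∫ x in q..b, f x‖ ≤ B := by
    rcases min_cases b (c + δ) with ⟨hq, -⟩ | ⟨hq, -⟩
    · simp [q, hq, hB]
    · refine hfar q b (hap.trans hpq) hqb le_rfl fun x hx => ?_
      rw [abs_of_nonneg] <;> linarith [hx.1]
  rw [← integral_add_adjacent_intervals (hfi' a p le_rfl hap (hpq.trans hqb))
      (hfi' p b hap (hpq.trans hqb) le_rfl),
    ← integral_add_adjacent_intervals (hfi' p q hap hpq hqb) (hfi' q b (hap.trans hpq) hqb le_rfl)]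
  calc _ ≤ ‖∫ x in a..p, f x‖ + (‖∫ x in p..q, f x‖ + ‖∫ x in q..b, f x‖) :=
        (norm_add_le _ _).trans (add_le_add_right (norm_add_le _ _) _)
    _ ≤ B + (2 * δ + B) := by gcongr
    _ = 2 * B + 2 * δ := by ring

lemma norm_integral_cexp_le_of_hasDerivAt_inv_deriv {w' : ℝ → ℝ} (hab : a ≤ b)
    (hφ : ∀ x ∈ Icc a b, HasDerivAt φ (φ' x) x) (hφ'c : ContinuousOn φ' (Icc a b))
    (hne : ∀ x ∈ Icc a b, φ' x ≠ 0)
    (hw : ∀ x ∈ Icc a b, HasDerivAt (fun y => (φ' y)⁻¹) (w' x) x)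
    (hw'c : ContinuousOn w' (Icc a b)) :
    ‖∫ x in a..b, cexp (Complex.I * φ x)‖ ≤
      |(φ' b)⁻¹| + |(φ' a)⁻¹| + ∫ x in a..b, |w' x| := by
  -- `cexp (i φ) = u * (cexp (i φ))'` with `u = 1 / (i φ')`; integrate by parts
  set u : ℝ → ℂ := fun x => -Complex.I * ((φ' x)⁻¹ : ℝ)
  set v : ℝ → ℂ := fun x => cexp (Complex.I * φ x)
  have hu : ∀ x ∈ uIcc a b, HasDerivAt u (-Complex.I * (w' x : ℂ)) x := fun x hx =>
    ((hw x (uIcc_of_le hab ▸ hx)).ofReal_comp).const_mul _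
  have hv : ∀ x ∈ uIcc a b, HasDerivAt v (Complex.I * φ' x * v x) x := fun x hx => by
    simpa [v, mul_comm] using ((hφ x (uIcc_of_le hab ▸ hx)).ofReal_comp.const_mul Complex.I).cexp
  have hφc : ContinuousOn φ (Icc a b) := HasDerivAt.continuousOn hφ
  have hbyparts : ∫ x in a..b, v x =
      u b * v b - u a * v a - ∫ x in a..b, -Complex.I * w' x * v x := by
    rw [← integral_mul_deriv_eq_deriv_mul hu hv
      (ContinuousOn.intervalIntegrable_of_Icc hab (by fun_prop))
      (ContinuousOn.intervalIntegrable_of_Icc hab (by fun_prop))]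
    refine integral_congr fun x hx => ?_
    have : (φ' x : ℂ) ≠ 0 := Complex.ofReal_ne_zero.2 (hne x (uIcc_of_le hab ▸ hx))
    simp only [u]
    push_cast
    field_simp
    ring_nf
    simp
  have huv (x : ℝ) : ‖u x * v x‖ = |(φ' x)⁻¹| := by
    simp [u, v, Complex.norm_exp_I_mul_ofReal]
  have hu'v (x : ℝ) : ‖-Complex.I * (w' x : ℂ) * v x‖ = |w' x| := by
    simp [v, Complex.norm_exp_I_mul_ofReal]
  rw [hbyparts, ← huv, ← huv]
  refine (norm_sub_le _ _).trans (add_le_add (norm_sub_le _ _) ?_)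
  exact (intervalIntegral.norm_integral_le_integral_norm hab).trans_eq
    (integral_congr fun x _ => hu'v x)

lemma norm_integral_cexp_le_of_le_abs_deriv {ν : ℝ} (hab : a ≤ b) (hν : 0 < ν)
    (hφ : ∀ x ∈ Icc a b, HasDerivAt φ (φ' x) x) (hφ' : ∀ x ∈ Icc a b, HasDerivAt φ' (φ'' x) x)
    (hφ''c : ContinuousOn φ'' (Icc a b)) (hmono : ∀ x ∈ Icc a b, 0 ≤ φ'' x)
    (hlow : ∀ x ∈ Icc a b, ν ≤ |φ' x|) :
    ‖∫ x in a..b, cexp (Complex.I * φ x)‖ ≤ 4 / ν := by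
  have hne : ∀ x ∈ Icc a b, φ' x ≠ 0 := fun x hx h => by
    have := hlow x hx; rw [h, abs_zero] at this; linarith
  have hinv_le : ∀ x ∈ Icc a b, |(φ' x)⁻¹| ≤ 1 / ν := fun x hx => by
    rw [abs_inv, one_div]; exact inv_anti₀ hν (hlow x hx)
  set r : ℝ → ℝ := fun x => -φ'' x / φ' x ^ 2
  have hr : ∀ x ∈ Icc a b, HasDerivAt (fun y => (φ' y)⁻¹) (r x) x := fun x hx =>
    (hφ' x hx).inv (hne x hx)
  have hφ'c : ContinuousOn φ' (Icc a b) := HasDerivAt.continuousOn hφ'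
  have hrc : ContinuousOn r (Icc a b) :=
    hφ''c.neg.div (hφ'c.pow 2) fun x hx => pow_ne_zero 2 (hne x hx)
  -- `r = (1 / φ')'` has constant sign, so its total mass is `|1 / φ' a - 1 / φ' b|`
  have hr_mass : ∫ x in a..b, |r x| = (φ' a)⁻¹ - (φ' b)⁻¹ := by
    have hr_nonpos : ∀ x ∈ uIcc a b, r x ≤ 0 := fun x hx =>
      div_nonpos_of_nonpos_of_nonneg (neg_nonpos.2 (hmono x (uIcc_of_le hab ▸ hx))) (sq_nonneg _)
    rw [integral_congr fun x hx => abs_of_nonpos (hr_nonpos x hx), intervalIntegral.integral_neg,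
      integral_eq_sub_of_hasDerivAt (fun x hx => hr x (uIcc_of_le hab ▸ hx))
        (hrc.intervalIntegrable_of_Icc hab)]
    ring
  have ha := hinv_le a (left_mem_Icc.2 hab)
  have hb := hinv_le b (right_mem_Icc.2 hab)
  calc _ ≤ |(φ' b)⁻¹| + |(φ' a)⁻¹| + ∫ x in a..b, |r x| :=
        norm_integral_cexp_le_of_hasDerivAt_inv_deriv hab hφ hφ'c hne hr hrc
    _ ≤ 4 / ν := by
        linarith [le_abs_self (φ' a)⁻¹, neg_abs_le (φ' b)⁻¹, div_eq_mul_one_div 4 ν]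

lemma norm_integral_cexp_le_of_le_deriv2 {ν : ℝ} (hab : a ≤ b) (hν : 0 < ν)
    (hφ : ∀ x ∈ Icc a b, HasDerivAt φ (φ' x) x) (hφ' : ∀ x ∈ Icc a b, HasDerivAt φ' (φ'' x) x)
    (hφ''c : ContinuousOn φ'' (Icc a b)) (hlow : ∀ x ∈ Icc a b, ν ^ 2 ≤ φ'' x) :
    ‖∫ x in a..b, cexp (Complex.I * φ x)‖ ≤ 10 / ν := by
  obtain ⟨c, hc, hgrowth⟩ := exists_mul_abs_sub_le_abs_of_le_deriv hab hφ' hlow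
  refine (norm_integral_le_of_le_off_window hc (δ := 1 / ν) (B := 4 / ν) (by positivity)
    (by positivity) (fun x => (Complex.norm_exp_I_mul_ofReal _).le)
    (intervalIntegrable_cexp_I_mul hab (HasDerivAt.continuousOn hφ))
    fun u v hau huv hvb hfar => ?_).trans_eq (by ring)
  have hsub : Icc u v ⊆ Icc a b := Icc_subset_Icc hau hvb
  refine norm_integral_cexp_le_of_le_abs_deriv huv hν (fun x hx => hφ x (hsub hx))
    (fun x hx => hφ' x (hsub hx)) (hφ''c.mono hsub)
    (fun x hx => (sq_nonneg ν).trans (hlow x (hsub hx))) fun x hx => ?_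
  calc ν = ν ^ 2 * (1 / ν) := by field_simp
    _ ≤ ν ^ 2 * |x - c| := by gcongr; exact hfar x hx
    _ ≤ |φ' x| := hgrowth x (hsub hx)

lemma norm_integral_cexp_le_of_le_abs_deriv2 {ν : ℝ} (hab : a ≤ b) (hν : 0 < ν)
    (hφ : ∀ x ∈ Icc a b, HasDerivAt φ (φ' x) x) (hφ' : ∀ x ∈ Icc a b, HasDerivAt φ' (φ'' x) x)
    (hφ''c : ContinuousOn φ'' (Icc a b)) (hlow : ∀ x ∈ Icc a b, ν ^ 2 ≤ |φ'' x|) :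
    ‖∫ x in a..b, cexp (Complex.I * φ x)‖ ≤ 10 / ν := by
  rcases hφ''c.forall_le_or_forall_le_neg (by positivity) hlow with hpos | hneg
  · exact norm_integral_cexp_le_of_le_deriv2 hab hν hφ hφ' hφ''c hpos
  · rw [← norm_integral_cexp_neg]
    exact norm_integral_cexp_le_of_le_deriv2 hab hν (fun x hx => (hφ x hx).neg)
      (fun x hx => (hφ' x hx).neg) hφ''c.neg hneg

lemma norm_integral_cexp_le_of_le_deriv3 {ν : ℝ} (hab : a ≤ b) (hν : 0 < ν)
    (hφ : ∀ x ∈ Icc a b, HasDerivAt φ (φ' x) x) (hφ' : ∀ x ∈ Icc a b, HasDerivAt φ' (φ'' x) x)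
    (hφ'' : ∀ x ∈ Icc a b, HasDerivAt φ'' (φ''' x) x) (hlow : ∀ x ∈ Icc a b, ν ^ 3 ≤ φ''' x) :
    ‖∫ x in a..b, cexp (Complex.I * φ x)‖ ≤ 22 / ν := by
  obtain ⟨c, hc, hgrowth⟩ := exists_mul_abs_sub_le_abs_of_le_deriv hab hφ'' hlow
  refine (norm_integral_le_of_le_off_window hc (δ := 1 / ν) (B := 10 / ν) (by positivity)
    (by positivity) (fun x => (Complex.norm_exp_I_mul_ofReal _).le)
    (intervalIntegrable_cexp_I_mul hab (HasDerivAt.continuousOn hφ))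
    fun u v hau huv hvb hfar => ?_).trans_eq (by ring)
  have hsub : Icc u v ⊆ Icc a b := Icc_subset_Icc hau hvb
  refine norm_integral_cexp_le_of_le_abs_deriv2 huv hν (fun x hx => hφ x (hsub hx))
    (fun x hx => hφ' x (hsub hx)) ((HasDerivAt.continuousOn hφ'').mono hsub) fun x hx => ?_
  calc ν ^ 2 = ν ^ 3 * (1 / ν) := by field_simp
    _ ≤ ν ^ 3 * |x - c| := by gcongr; exact hfar x hx
    _ ≤ |φ'' x| := hgrowth x (hsub hx)

lemma norm_integral_cexp_le_of_le_abs_deriv3 {ν : ℝ} (hab : a ≤ b) (hν : 0 < ν)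
    (hφ : ∀ x ∈ Icc a b, HasDerivAt φ (φ' x) x) (hφ' : ∀ x ∈ Icc a b, HasDerivAt φ' (φ'' x) x)
    (hφ'' : ∀ x ∈ Icc a b, HasDerivAt φ'' (φ''' x) x) (hφ'''c : ContinuousOn φ''' (Icc a b))
    (hlow : ∀ x ∈ Icc a b, ν ^ 3 ≤ |φ''' x|) :
    ‖∫ x in a..b, cexp (Complex.I * φ x)‖ ≤ 22 / ν := by
  rcases hφ'''c.forall_le_or_forall_le_neg (by positivity) hlow with hpos | hneg
  · exact norm_integral_cexp_le_of_le_deriv3 hab hν hφ hφ' hφ'' hpos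
  · rw [← norm_integral_cexp_neg]
    exact norm_integral_cexp_le_of_le_deriv3 hab hν (fun x hx => (hφ x hx).neg)
      (fun x hx => (hφ' x hx).neg) (fun x hx => (hφ'' x hx).neg) hneg

end VanDerCorput

lemma norm_integral_le_add_of_adjacent {f : ℝ → ℂ} (hf : Continuous f) {a b c A B : ℝ}
    (hab : ‖∫ x in a..b, f x‖ ≤ A) (hbc : ‖∫ x in b..c, f x‖ ≤ B) :
    ‖∫ x in a..c, f x‖ ≤ A + B := by
  rw [← integral_add_adjacent_intervals (hf.intervalIntegrable a b) (hf.intervalIntegrable b c)]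
  exact (norm_add_le _ _).trans (add_le_add hab hbc)

lemma half_le_abs_cos_of_abs_sub_int_mul_pi_le {x : ℝ} (k : ℤ) (hx : |x - k * π| ≤ π / 3) :
    1 / 2 ≤ |cos x| := by
  have hcos : cos (π / 3) ≤ cos |x - k * π| :=
    cos_le_cos_of_nonneg_of_le_pi (abs_nonneg _) (by linarith [pi_pos]) hx
  rw [cos_pi_div_three, cos_abs, cos_sub_int_mul_pi] at hcos
  calc 1 / 2 ≤ |(-1) ^ k * cos x| := hcos.trans (le_abs_self _)
    _ = |cos x| := by simp [abs_mul, abs_zpow]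

lemma half_le_abs_sin_of_abs_sub_int_mul_pi_le {x : ℝ} (k : ℤ)
    (hx : |x - (k * π + π / 2)| ≤ π / 3) : 1 / 2 ≤ |sin x| := by
  rw [← cos_sub_pi_div_two]
  exact half_le_abs_cos_of_abs_sub_int_mul_pi_le k (by rwa [sub_right_comm, sub_sub])

section SchrodingerPhase

variable (t : ℝ) (j : ℤ)

noncomputable def schrodingerPhase (ξ : ℝ) : ℝ := j * ξ - 2 * t * (1 - cos ξ)

lemma schrodingerKernel_eq_integral_phase :
    schrodingerKernel t j =
      (1 / (2 * π)) * ∫ ξ in (-π)..π, cexp (Complex.I * schrodingerPhase t j ξ) := by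
  unfold schrodingerKernel
  congr 1
  refine integral_congr fun ξ _ => ?_
  have hsin : sin (ξ / 2) ^ 2 = (1 - cos ξ) / 2 := by
    rw [sin_sq_eq_half_sub, mul_div_cancel₀ ξ two_ne_zero]; ring
  rw [← Complex.exp_add, ← Complex.ofReal_pow, hsin, schrodingerPhase]
  push_cast
  ring_nf

lemma continuous_cexp_schrodingerPhase :
    Continuous fun ξ => cexp (Complex.I * schrodingerPhase t j ξ) := by
  unfold schrodingerPhase; fun_prop

lemma hasDerivAt_schrodingerPhase (ξ : ℝ) :
    HasDerivAt (schrodingerPhase t j) (j - 2 * t * sin ξ) ξ :=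
  (((hasDerivAt_id ξ).const_mul (j : ℝ)).sub
    (((hasDerivAt_cos ξ).const_sub 1).const_mul (2 * t))).congr_deriv (by simp)

lemma hasDerivAt_schrodingerPhase_deriv (ξ : ℝ) :
    HasDerivAt (fun ξ => (j : ℝ) - 2 * t * sin ξ) (-(2 * t * cos ξ)) ξ :=
  ((hasDerivAt_sin ξ).const_mul (2 * t)).const_sub _

lemma hasDerivAt_schrodingerPhase_deriv2 (ξ : ℝ) :
    HasDerivAt (fun ξ => -(2 * t * cos ξ)) (2 * t * sin ξ) ξ :=
  ((hasDerivAt_cos ξ).const_mul (2 * t)).neg.congr_deriv (by ring)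

end SchrodingerPhase

section SchrodingerBounds

variable (t : ℝ) (j : ℤ) {ν : ℝ}

lemma norm_integral_cexp_schrodingerPhase_le_of_cos {c d : ℝ} (hcd : c ≤ d) (hν : 0 < ν)
    (hν2 : ν ^ 2 ≤ |t|) (hcos : ∀ x ∈ Icc c d, 1 / 2 ≤ |cos x|) :
    ‖∫ ξ in c..d, cexp (Complex.I * schrodingerPhase t j ξ)‖ ≤ 10 / ν :=
  norm_integral_cexp_le_of_le_abs_deriv2 hcd hν
    (fun ξ _ => hasDerivAt_schrodingerPhase t j ξ)
    (fun ξ _ => hasDerivAt_schrodingerPhase_deriv t j ξ) (by fun_prop) fun x hx => by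
      rw [abs_neg, abs_mul, abs_mul, abs_two]
      nlinarith [hcos x hx, abs_nonneg t]

lemma norm_integral_cexp_schrodingerPhase_le_of_sin {c d : ℝ} (hcd : c ≤ d) (hν : 0 < ν)
    (hν3 : ν ^ 3 ≤ |t|) (hsin : ∀ x ∈ Icc c d, 1 / 2 ≤ |sin x|) :
    ‖∫ ξ in c..d, cexp (Complex.I * schrodingerPhase t j ξ)‖ ≤ 22 / ν :=
  norm_integral_cexp_le_of_le_abs_deriv3 hcd hν
    (fun ξ _ => hasDerivAt_schrodingerPhase t j ξ)
    (fun ξ _ => hasDerivAt_schrodingerPhase_deriv t j ξ)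
    (fun ξ _ => hasDerivAt_schrodingerPhase_deriv2 t ξ) (by fun_prop) fun x hx => by
      rw [abs_mul, abs_mul, abs_two]
      nlinarith [hsin x hx, abs_nonneg t]

lemma norm_integral_cexp_schrodingerPhase_le (hν : 0 < ν) (hν2 : ν ^ 2 ≤ |t|)
    (hν3 : ν ^ 3 ≤ |t|) :
    ‖∫ ξ in (-π)..π, cexp (Complex.I * schrodingerPhase t j ξ)‖ ≤ 74 / ν := by
  have hπ := pi_pos
  have hcos (k : ℤ) {c d : ℝ} (hcd : c ≤ d) (hk : ∀ x ∈ Icc c d, |x - k * π| ≤ π / 3) :=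
    norm_integral_cexp_schrodingerPhase_le_of_cos t j hcd hν hν2 fun x hx =>
      half_le_abs_cos_of_abs_sub_int_mul_pi_le k (hk x hx)
  have hsin (k : ℤ) {c d : ℝ} (hcd : c ≤ d)
      (hk : ∀ x ∈ Icc c d, |x - (k * π + π / 2)| ≤ π / 3) :=
    norm_integral_cexp_schrodingerPhase_le_of_sin t j hcd hν hν3 fun x hx =>
      half_le_abs_sin_of_abs_sub_int_mul_pi_le k (hk x hx)
  have hf := continuous_cexp_schrodingerPhase t j
  refine (norm_integral_le_add_of_adjacent hf (norm_integral_le_add_of_adjacent hf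
    (norm_integral_le_add_of_adjacent hf (norm_integral_le_add_of_adjacent hf
      (hcos (-1) (c := -π) (d := -(2 * π / 3)) (by linarith) fun x hx => ?_)
      (hsin (-1) (c := -(2 * π / 3)) (d := -(π / 3)) (by linarith) fun x hx => ?_))
      (hcos 0 (c := -(π / 3)) (d := π / 3) (by linarith) fun x hx => ?_))
      (hsin 0 (c := π / 3) (d := 2 * π / 3) (by linarith) fun x hx => ?_))
      (hcos 1 (c := 2 * π / 3) (d := π) (by linarith) fun x hx => ?_)).trans_eq (by ring) <;>
  · push_cast
    exact abs_le.2 ⟨by linarith [hx.1], by linarith [hx.2]⟩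

lemma norm_schrodingerKernel_eq :
    ‖schrodingerKernel t j‖ =
      ‖∫ ξ in (-π)..π, cexp (Complex.I * schrodingerPhase t j ξ)‖ / (2 * π) := by
  rw [schrodingerKernel_eq_integral_phase, norm_mul]
  simp [abs_of_pos pi_pos]
  ring

lemma norm_schrodingerKernel_le_one : ‖schrodingerKernel t j‖ ≤ 1 := by
  have hint := norm_integral_le_of_norm_le_const (a := -π) (b := π)
    fun ξ _ => (Complex.norm_exp_I_mul_ofReal (schrodingerPhase t j ξ)).le
  rw [one_mul, abs_of_pos (by linarith [pi_pos])] at hint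
  rw [norm_schrodingerKernel_eq, div_le_one (by positivity)]
  linarith

lemma norm_schrodingerKernel_le (hν : 0 < ν) (hν2 : ν ^ 2 ≤ |t|) (hν3 : ν ^ 3 ≤ |t|) :
    ‖schrodingerKernel t j‖ ≤ 13 / ν := by
  rw [norm_schrodingerKernel_eq, div_le_iff₀ (by positivity)]
  calc _ ≤ 74 / ν := norm_integral_cexp_schrodingerPhase_le t j hν hν2 hν3
    _ ≤ 13 / ν * (2 * π) := by
      rw [div_mul_eq_mul_div, div_le_div_iff_of_pos_right hν]
      linarith [pi_gt_three]

end SchrodingerBounds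

/-- Uniform `(1+|t|)^{-1/3}` decay of the discrete Schrödinger kernel. -/
theorem discrete_schrodinger_kernel_decay :
    ∃ C > 0, ∀ (t : ℝ) (j : ℤ),
      ‖schrodingerKernel t j‖ ≤ C * (1 + |t|) ^ (-(1 / 3 : ℝ)) := by
  refine ⟨26, by norm_num, fun t j => ?_⟩
  set s := (1 + |t|) ^ (1 / 3 : ℝ)
  have hs : 0 < s := by positivity
  have hs3 : s ^ 3 = 1 + |t| := by
    rw [← rpow_natCast, ← rpow_mul (by positivity)]; norm_num
  rw [rpow_neg (by positivity), ← div_eq_mul_inv]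
  rcases le_total |t| 1 with hsmall | hlarge
  · have hs2 : s ≤ 2 := by nlinarith [sq_nonneg (s - 2), sq_nonneg s]
    exact (norm_schrodingerKernel_le_one t j).trans ((le_div_iff₀ hs).2 (by linarith))
  · have hs1 : 1 ≤ s := by nlinarith [sq_nonneg (s - 1), sq_nonneg s]
    refine (norm_schrodingerKernel_le t j (ν := s / 2) (by positivity) ?_ ?_).trans_eq ?_
    · nlinarith
    · nlinarith
    · ring
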